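/- Let T be an irreducible positive trace-preserving linear map on M_n and V ⊆ ℂⁿ a nonzero subspace. Then 1 is not an eigenvalue of the map ℚT : M_n → M_n; that is, every irreducible channel satisfies Assumption I with respect to every nonzero goal subspace. -/

import Mathlib

open Matrix
open scoped ComplexOrder

noncomputable section

/-- The algebra of `n × n` complex matrices. -/
abbrev Mn (n : ℕ) : Type := Matrix (Fin n) (Fin n) ℂ

/-- The map `X ↦ Q X Q`. -/
def sandwich {n : ℕ} (Q : Mn n) : Module.End ℂ (Mn n) :=
  (LinearMap.mulLeft ℂ Q).comp (LinearMap.mulRight ℂ Q)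

/-- The sum of the two components of a pair. -/
def sumPair (n : ℕ) : (Mn n × Mn n) →ₗ[ℂ] Mn n :=
  LinearMap.fst ℂ (Mn n) (Mn n) + LinearMap.snd ℂ (Mn n) (Mn n)

/-- The QMC `Λ_{T,V}` induced by the channel `T` and the subspace `V` (with orthogonal
projection `P` onto `V` and `Q = I − P`):
`Λ(X₁,X₂) = ((I−ℚ)(T(X₁+X₂)), ℚ(T(X₁+X₂)))` where `ℚ(Y) = QYQ`. -/
def Lam {n : ℕ} (T : Module.End ℂ (Mn n)) (Q : Mn n) : Module.End ℂ (Mn n × Mn n) :=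
  LinearMap.prod
    (((1 : Module.End ℂ (Mn n)) - sandwich Q) ∘ₗ (T ∘ₗ sumPair n))
    ((sandwich Q) ∘ₗ (T ∘ₗ sumPair n))

/-- `ℙ₁(X₁,X₂) = (X₁,0)`. -/
def proj1 (n : ℕ) : Module.End ℂ (Mn n × Mn n) :=
  (LinearMap.inl ℂ (Mn n) (Mn n)).comp (LinearMap.fst ℂ (Mn n) (Mn n))

/-- `ℙ₂(X₁,X₂) = (0,X₂)`. -/
def proj2 (n : ℕ) : Module.End ℂ (Mn n × Mn n) :=
  (LinearMap.inr ℂ (Mn n) (Mn n)).comp (LinearMap.snd ℂ (Mn n) (Mn n))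

/-- The block-diagonal part `S_d = diag(S₁₁,S₂₂)` of a map on `M_n ⊕ M_n`. -/
def diagPart {n : ℕ} (S : Module.End ℂ (Mn n × Mn n)) : Module.End ℂ (Mn n × Mn n) :=
  proj1 n * S * proj1 n + proj2 n * S * proj2 n

/-- The map `E(X₁,X₂) = (X₁+X₂, X₁+X₂)`. -/
def Emap (n : ℕ) : Module.End ℂ (Mn n × Mn n) :=
  LinearMap.prod (sumPair n) (sumPair n)

/-- The map `Θ_W(X₁,X₂) = Tr(X₁+X₂)·W`. -/
def Theta {n : ℕ} (W : Mn n × Mn n) : Module.End ℂ (Mn n × Mn n) :=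
  ((Matrix.traceLinearMap (Fin n) ℂ ℂ) ∘ₗ sumPair n).smulRight W

/-- The mean hitting time `τ(ρ → V) = Σ_{r ≥ 1} r·Tr(ℙT(ℚT)^{r−1} ρ)`. -/
def tau {n : ℕ} (T : Module.End ℂ (Mn n)) (P Q : Mn n) (ρ : Mn n) : ℂ :=
  ∑' r : ℕ, ((r : ℂ) + 1) * ((sandwich P * T * (sandwich Q * T) ^ r) ρ).trace

/-- The pure state `ρ_φ = |φ⟩⟨φ|`. -/
def rhoOf {n : ℕ} (φ : Fin n → ℂ) : Mn n := Matrix.vecMulVec φ (star φ)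

/-- A positive map on `M_n`. -/
def IsPosMap {n : ℕ} (T : Module.End ℂ (Mn n)) : Prop :=
  ∀ X : Mn n, X.PosSemidef → (T X).PosSemidef

/-- A trace-preserving map on `M_n`. -/
def IsTracePreserving {n : ℕ} (T : Module.End ℂ (Mn n)) : Prop :=
  ∀ X : Mn n, (T X).trace = X.trace

/-- A quantum channel: a completely positive trace-preserving map, given by a Kraus
decomposition `T(X) = Σᵢ Vᵢ X Vᵢ*` with `Σᵢ Vᵢ* Vᵢ = I`. -/
def IsChannel {n : ℕ} (T : Module.End ℂ (Mn n)) : Prop :=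
  ∃ (k : ℕ) (V : Fin k → Mn n),
    (∀ X : Mn n, T X = ∑ i, V i * X * (V i)ᴴ) ∧ (∑ i, (V i)ᴴ * V i = 1)

/-- Irreducibility of a positive map on `M_n`: the only orthogonal projections `P` with
`T(P M_n P) ⊆ P M_n P` are `P = 0` and `P = I`. -/
def IsIrreducibleMap {n : ℕ} (T : Module.End ℂ (Mn n)) : Prop :=
  ∀ P : Mn n, P.IsHermitian → P * P = P →
    (∀ X : Mn n, ∃ Y : Mn n, T (P * X * P) = P * Y * P) → P = 0 ∨ P = 1

/-!
Suppose `ℚT X = X` with `X ≠ 0`. The map `S = ℚT` is positive, hence commutes with `star`, so it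
has a self-adjoint fixed point `A` with `A⁺ ≠ 0`. Since `A ≤ A⁺`, positivity gives `A ≤ Sᵏ A⁺`,
and compressing with the spectral projection of `A` onto `(0, ∞)` yields `Tr A⁺ ≤ Tr (Sᵏ A⁺)`.
On the other hand `Tr (S Y) = Tr Y - Tr (P T(Y) P)` because `T` preserves the trace, so the traces
`Tr (Sᵏ A⁺)` are constant and all compressions `P T(Sᵏ A⁺) P` vanish. Hence `Sᵏ A⁺ = Tᵏ A⁺`, and
every `Tᵏ⁺¹ A⁺` annihilates the range of `P`.

For `D = A⁺` the kernels of the partial sums `C = T D + ⋯ + Tᵐ D` decrease, so they stabilize,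
and then `T C ≤ T D + ⋯ + Tᵐ⁺¹ D` gives `ker C ⊆ ker (T C)`: `T C` lies in the corner `R M_n R`
of the support projection `R` of `C`. As `R ≤ t C`, so does `T R`, and since every positive
element of the corner is at most a multiple of `R`, the corner is `T`-invariant. Irreducibility
forces `R = 0` or `R = I`; the first contradicts `C ≠ 0`, the second `C P = 0` with `P ≠ 0`.
-/

open scoped MatrixOrder ComplexStarModule

lemma IsStarProjection.conj_eq_of_mul_one_sub_eq_zero {R : Type*} [Ring R] [StarRing R]
    {p w : R} (hp : IsStarProjection p) (hw : IsSelfAdjoint w) (h : w * (1 - p) = 0) :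
    p * w * p = w := by
  have hwp : w * p = w := by rwa [mul_sub, mul_one, sub_eq_zero, eq_comm] at h
  have hpw : p * w = w := by
    simpa [hw.star_eq, hp.isSelfAdjoint.star_eq] using congrArg star hwp
  rw [hpw, hwp]

namespace Matrix

variable {ι 𝕜 : Type*} [Fintype ι] [RCLike 𝕜]

lemma _root_.IsStarProjection.trace_mul_nonneg {E Z : Matrix ι ι 𝕜} (hE : IsStarProjection E)
    (hZ : 0 ≤ Z) : 0 ≤ (E * Z).trace := by
  have h := (nonneg_iff_posSemidef.mp (star_left_conjugate_nonneg hZ E)).trace_nonneg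
  rwa [hE.isSelfAdjoint.star_eq, trace_mul_cycle, hE.isIdempotentElem.eq] at h

variable [DecidableEq ι]

lemma mul_eq_zero_of_conjTranspose_mul_mul_eq_zero {W c : Matrix ι ι 𝕜} (hW : 0 ≤ W)
    (h : cᴴ * W * c = 0) : W * c = 0 := by
  have hsqrt : (CFC.sqrt W)ᴴ = CFC.sqrt W := (CFC.sqrt_nonneg W).star_eq
  have hroot : CFC.sqrt W * c = 0 := by
    refine conjTranspose_mul_self_eq_zero.mp ?_
    calc (CFC.sqrt W * c)ᴴ * (CFC.sqrt W * c) = cᴴ * (CFC.sqrt W * CFC.sqrt W) * c := by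
          rw [conjTranspose_mul, hsqrt]; noncomm_ring
      _ = 0 := by rw [CFC.sqrt_mul_sqrt_self W hW, h]
  rw [← CFC.sqrt_mul_sqrt_self W hW, mul_assoc, hroot, mul_zero]

lemma ker_toLin'_le_of_le {Z Y : Matrix ι ι 𝕜} (hZ : 0 ≤ Z) (hZY : Z ≤ Y) :
    LinearMap.ker (toLin' Y) ≤ LinearMap.ker (toLin' Z) := by
  intro v hv
  rw [LinearMap.mem_ker, toLin'_apply] at hv ⊢
  have hZ' := nonneg_iff_posSemidef.mp hZ
  refine (hZ'.dotProduct_mulVec_zero_iff v).mp (le_antisymm ?_ (hZ'.dotProduct_mulVec_nonneg v))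
  have h := (le_iff.mp hZY).dotProduct_mulVec_nonneg v
  rwa [sub_mulVec, dotProduct_sub, hv, dotProduct_zero, zero_sub, neg_nonneg] at h

lemma _root_.IsStarProjection.conj_eq_of_le {R W Z : Matrix ι ι 𝕜} (hR : IsStarProjection R)
    (hW : 0 ≤ W) (hWZ : W ≤ Z) (hZ : R * Z * R = Z) : R * W * R = W := by
  have hRc : (1 - R)ᴴ = 1 - R := hR.one_sub.isSelfAdjoint.star_eq
  have hZc : (1 - R)ᴴ * Z * (1 - R) = 0 := by
    rw [hRc, ← hZ, show (1 - R) * (R * Z * R) * (1 - R) = ((1 - R) * R) * Z * (R * (1 - R)) by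
      noncomm_ring, hR.one_sub_mul_self, zero_mul, zero_mul]
  have hWc : (1 - R)ᴴ * W * (1 - R) = 0 :=
    le_antisymm (hZc ▸ star_left_conjugate_le_conjugate hWZ (1 - R))
      (star_left_conjugate_nonneg hW (1 - R))
  exact hR.conj_eq_of_mul_one_sub_eq_zero hW.isSelfAdjoint
    (mul_eq_zero_of_conjTranspose_mul_mul_eq_zero hW hWc)

lemma continuousOn_spectrum_real (A : Matrix ι ι 𝕜) (f : ℝ → ℝ) :
    ContinuousOn f (spectrum ℝ A) :=
  A.finite_real_spectrum.continuousOn f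

/-- For `0 ≤ C` this is the orthogonal projection onto the range of `C`. -/
def posSpectralProj (A : Matrix ι ι 𝕜) : Matrix ι ι 𝕜 :=
  cfc (fun x : ℝ => if 0 < x then (1 : ℝ) else 0) A

lemma isStarProjection_posSpectralProj (A : Matrix ι ι 𝕜) :
    IsStarProjection (posSpectralProj A) where
  isIdempotentElem := by
    rw [IsIdempotentElem, posSpectralProj, ← cfc_mul _ _ A (A.continuousOn_spectrum_real _)
      (A.continuousOn_spectrum_real _)]
    refine cfc_congr fun x _ => ?_
    split_ifs <;> simp
  isSelfAdjoint := cfc_predicate _ A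

lemma posSpectralProj_mul {A : Matrix ι ι 𝕜} (hA : IsSelfAdjoint A) :
    posSpectralProj A * A = A⁺ := by
  have hmul := cfc_mul (fun x : ℝ => if 0 < x then (1 : ℝ) else 0) (fun x => x) A
    (A.continuousOn_spectrum_real _)
  rw [cfc_id' ℝ A] at hmul
  rw [CFC.posPart_def, cfcₙ_eq_cfc, posSpectralProj, ← hmul]
  refine cfc_congr fun x _ => ?_
  split_ifs with hx
  · simp [hx.le]
  · simp [not_lt.mp hx]

lemma posSpectralProj_mul_of_nonneg {C : Matrix ι ι 𝕜} (hC : 0 ≤ C) :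
    posSpectralProj C * C = C := by
  rw [posSpectralProj_mul hC.isSelfAdjoint, CFC.posPart_eq_self]
  exact hC

lemma exists_posSpectralProj_le_smul {C : Matrix ι ι 𝕜} (hC : 0 ≤ C) :
    ∃ t : ℝ, posSpectralProj C ≤ t • C := by
  obtain ⟨t, ht⟩ := (C.finite_real_spectrum.image (·⁻¹)).bddAbove
  refine ⟨t, ?_⟩
  calc posSpectralProj C ≤ cfc (fun x : ℝ => t * x) C :=
        cfc_mono (fun x hx => ?_) (C.continuousOn_spectrum_real _)
          (C.continuousOn_spectrum_real _)
    _ = t • C := by rw [cfc_const_mul t _ C, cfc_id' ℝ C]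
  have hx0 := spectrum_nonneg_of_nonneg hC hx
  have hxt : x⁻¹ ≤ t := ht ⟨x, hx, rfl⟩
  split_ifs with hpos
  · calc (1 : ℝ) = x⁻¹ * x := (inv_mul_cancel₀ hpos.ne').symm
      _ ≤ t * x := mul_le_mul_of_nonneg_right hxt hx0
  · rw [le_antisymm (not_lt.mp hpos) hx0, mul_zero]

lemma posSpectralProj_conj_eq_of_ker_le {C W : Matrix ι ι 𝕜} (hC : 0 ≤ C) (hW : 0 ≤ W)
    (h : LinearMap.ker (toLin' C) ≤ LinearMap.ker (toLin' W)) :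
    posSpectralProj C * W * posSpectralProj C = W := by
  set R := posSpectralProj C
  have hR := isStarProjection_posSpectralProj C
  have hCR : C * R = C := by
    simpa [hC.star_eq, hR.isSelfAdjoint.star_eq] using
      congrArg star (posSpectralProj_mul_of_nonneg hC)
  have hrange : LinearMap.range (toLin' (1 - R)) ≤ LinearMap.ker (toLin' W) := by
    refine le_trans (LinearMap.range_le_ker_iff.mpr ?_) h
    rw [← toLin'_mul, mul_sub, mul_one, hCR, sub_self, map_zero]
  rw [LinearMap.range_le_ker_iff, ← toLin'_mul] at hrange
  exact hR.conj_eq_of_mul_one_sub_eq_zero hW.isSelfAdjoint (toLin'.map_eq_zero_iff.mp hrange)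

lemma trace_posPart_le_of_le {A Y : Matrix ι ι 𝕜} (hA : IsSelfAdjoint A) (hY : 0 ≤ Y)
    (hAY : A ≤ Y) : A⁺.trace ≤ Y.trace := by
  have hE := isStarProjection_posSpectralProj A
  have hEA := hE.trace_mul_nonneg (sub_nonneg.mpr hAY)
  have hEY := hE.one_sub.trace_mul_nonneg hY
  rw [mul_sub, trace_sub, sub_nonneg, posSpectralProj_mul hA] at hEA
  rw [sub_mul, one_mul, trace_sub, sub_nonneg] at hEY
  exact hEA.trans hEY

end Matrix

section PositiveMaps

variable {n : ℕ}

lemma sandwich_apply (Q X : Mn n) : sandwich Q X = Q * X * Q := by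
  simp [sandwich, mul_assoc]

lemma trace_sandwich_one_sub {P : Mn n} (hP : IsIdempotentElem P) (X : Mn n) :
    (sandwich (1 - P) X).trace = X.trace - (P * X * P).trace := by
  rw [sandwich_apply, trace_mul_cycle, hP.one_sub.eq, trace_mul_cycle, hP.eq, sub_mul, one_mul,
    trace_sub]

lemma isPosMap_sandwich {Q : Mn n} (hQ : IsSelfAdjoint Q) : IsPosMap (sandwich Q) := by
  intro X hX
  rw [sandwich_apply, ← nonneg_iff_posSemidef]
  simpa [hQ.star_eq] using star_left_conjugate_nonneg (nonneg_iff_posSemidef.mpr hX) Q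

def orbitSum (T : Module.End ℂ (Mn n)) (D : Mn n) (m : ℕ) : Mn n :=
  ∑ k ∈ Finset.range m, (T ^ (k + 1)) D

lemma orbitSum_succ (T : Module.End ℂ (Mn n)) (D : Mn n) (m : ℕ) :
    orbitSum T D (m + 1) = T (orbitSum T D m) + T D := by
  simp only [orbitSum, Finset.sum_range_succ', map_sum, pow_succ' T, Module.End.mul_apply,
    pow_zero, Module.End.one_apply]

namespace IsPosMap

variable {S T : Module.End ℂ (Mn n)}

lemma map_nonneg (hT : IsPosMap T) {X : Mn n} (hX : 0 ≤ X) : 0 ≤ T X :=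
  nonneg_iff_posSemidef.mpr (hT X (nonneg_iff_posSemidef.mp hX))

def toPositiveLinearMap (hT : IsPosMap T) : Mn n →ₚ[ℂ] Mn n :=
  PositiveLinearMap.mk₀ T fun _ => hT.map_nonneg

@[simp]
lemma toPositiveLinearMap_apply (hT : IsPosMap T) (X : Mn n) : hT.toPositiveLinearMap X = T X :=
  rfl

lemma mono (hT : IsPosMap T) {X Y : Mn n} (h : X ≤ Y) : T X ≤ T Y :=
  OrderHomClass.mono hT.toPositiveLinearMap h

lemma mul (hS : IsPosMap S) (hT : IsPosMap T) : IsPosMap (S * T) :=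
  fun X hX => hS _ (hT X hX)

lemma pow (hT : IsPosMap T) (k : ℕ) : IsPosMap (T ^ k) := by
  induction k with
  | zero => exact fun X hX => hX
  | succ k ih => rw [pow_succ]; exact ih.mul hT

lemma exists_fixedPoint_posPart_ne_zero (hS : IsPosMap S) (h : S.HasEigenvalue 1) :
    ∃ A : Mn n, IsSelfAdjoint A ∧ A⁺ ≠ 0 ∧ S A = A := by
  obtain ⟨X, hX⟩ := h.exists_hasEigenvector
  have hfix : S X = X := by simpa using hX.apply_eq_smul
  have hreal : S (ℜ X : Mn n) = ℜ X := by
    simpa [hfix] using map_realPart hS.toPositiveLinearMap X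
  have himag : S (ℑ X : Mn n) = ℑ X := by
    simpa [hfix] using map_imaginaryPart hS.toPositiveLinearMap X
  obtain ⟨B, hB, hB0, hBfix⟩ : ∃ B : Mn n, IsSelfAdjoint B ∧ B ≠ 0 ∧ S B = B := by
    by_cases h0 : (ℜ X : Mn n) = 0
    · refine ⟨ℑ X, (ℑ X).2, fun h1 => hX.2 ?_, himag⟩
      rw [← realPart_add_I_smul_imaginaryPart X, h0, h1, smul_zero, add_zero]
    · exact ⟨ℜ X, (ℜ X).2, h0, hreal⟩
  by_cases hpos : B⁺ = 0
  · refine ⟨-B, hB.neg, fun hneg => hB0 (le_antisymm ?_ ?_), by rw [map_neg, hBfix]⟩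
    · exact (CFC.posPart_eq_zero_iff B).mp hpos
    · exact neg_nonpos.mp ((CFC.posPart_eq_zero_iff (-B)).mp hneg)
  · exact ⟨B, hB, hpos, hBfix⟩

lemma trace_posPart_le_of_apply_eq_self (hS : IsPosMap S) {A : Mn n} (hA : IsSelfAdjoint A)
    (hfix : S A = A) : A⁺.trace ≤ (S A⁺).trace :=
  trace_posPart_le_of_le hA (hS.map_nonneg (CFC.posPart_nonneg A)) <|
    calc A = S A := hfix.symm
      _ ≤ S A⁺ := hS.mono (CFC.le_posPart hA)

lemma pow_succ_apply_posPart_mul_eq_zero (hT : IsPosMap T) (hTtr : IsTracePreserving T)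
    {P : Mn n} (hP : IsStarProjection P) {A : Mn n} (hA : IsSelfAdjoint A)
    (hfix : sandwich (1 - P) (T A) = A) (k : ℕ) : (T ^ (k + 1)) A⁺ * P = 0 := by
  set S : Module.End ℂ (Mn n) := sandwich (1 - P) * T
  have hS : IsPosMap S := (isPosMap_sandwich hP.one_sub.isSelfAdjoint).mul hT
  set D : ℕ → Mn n := fun k => (S ^ k) A⁺
  have hD : ∀ k, 0 ≤ D k := fun k => (hS.pow k).map_nonneg (CFC.posPart_nonneg A)
  have hPTD : ∀ k, 0 ≤ P * T (D k) * P := fun k => by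
    simpa [hP.isSelfAdjoint.star_eq] using star_left_conjugate_nonneg (hT.map_nonneg (hD k)) P
  have hDsucc : ∀ k, D (k + 1) = sandwich (1 - P) (T (D k)) := fun k => by
    simp only [D, S, pow_succ', Module.End.mul_apply]
  have htrace : ∀ k, (D (k + 1)).trace = (D k).trace - (P * T (D k) * P).trace := fun k => by
    rw [← hTtr (D k), ← trace_sandwich_one_sub hP.isIdempotentElem, hDsucc]
  have hanti : Antitone fun k => (D k).trace := antitone_nat_of_succ_le fun k => by
    rw [htrace, sub_le_self_iff]
    exact (nonneg_iff_posSemidef.mp (hPTD k)).trace_nonneg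
  have hconst : ∀ k, (D k).trace = (D 0).trace := fun k =>
    le_antisymm (hanti k.zero_le) <| (hS.pow k).trace_posPart_le_of_apply_eq_self hA <| by
      rw [Module.End.pow_apply]; exact Function.IsFixedPt.iterate (f := S) hfix k
  have hTD : ∀ k, T (D k) * P = 0 := fun k => by
    refine mul_eq_zero_of_conjTranspose_mul_mul_eq_zero (hT.map_nonneg (hD k)) ?_
    rw [← star_eq_conjTranspose, hP.isSelfAdjoint.star_eq,
      ← (nonneg_iff_posSemidef.mp (hPTD k)).trace_eq_zero_iff]
    have h := htrace k
    rwa [hconst (k + 1), hconst k, eq_comm, sub_eq_self] at h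
  have hstep : ∀ k, D (k + 1) = T (D k) := fun k => by
    have hPT : P * T (D k) = 0 := by
      simpa [(hT.map_nonneg (hD k)).star_eq, hP.isSelfAdjoint.star_eq] using congrArg star (hTD k)
    rw [hDsucc, sandwich_apply, sub_mul, one_mul, hPT, sub_zero, mul_sub, mul_one, hTD, sub_zero]
  have horbit : ∀ k, D k = (T ^ k) A⁺ := fun k => by
    induction k with
    | zero => rfl
    | succ k ih => rw [hstep, ih, pow_succ', Module.End.mul_apply]
  rw [← horbit, hstep]
  exact hTD k

lemma orbitSum_nonneg (hT : IsPosMap T) {D : Mn n} (hD : 0 ≤ D) (m : ℕ) :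
    0 ≤ orbitSum T D m :=
  Finset.sum_nonneg fun k _ => (hT.pow (k + 1)).map_nonneg hD

lemma map_le_orbitSum_succ (hT : IsPosMap T) {D : Mn n} (hD : 0 ≤ D) (m : ℕ) :
    T (orbitSum T D m) ≤ orbitSum T D (m + 1) := by
  rw [orbitSum_succ]
  exact le_add_of_nonneg_right (hT.map_nonneg hD)

lemma exists_ker_orbitSum_le_ker_map (hT : IsPosMap T) {D : Mn n} (hD : 0 ≤ D) :
    ∃ m, LinearMap.ker (toLin' (orbitSum T D (m + 1))) ≤
      LinearMap.ker (toLin' (T (orbitSum T D (m + 1)))) := by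
  let K : ℕ →o (Submodule ℂ (Fin n → ℂ))ᵒᵈ :=
    ⟨fun m => OrderDual.toDual (LinearMap.ker (toLin' (orbitSum T D m))),
      monotone_nat_of_le_succ fun m => ker_toLin'_le_of_le (hT.orbitSum_nonneg hD m) <| by
        simp only [orbitSum, Finset.sum_range_succ]
        exact le_add_of_nonneg_right ((hT.pow (m + 1)).map_nonneg hD)⟩
  obtain ⟨N, hN⟩ := IsArtinian.monotone_stabilizes K
  have hstab : K (N + 1) = K (N + 2) := (hN (N + 1) (by omega)).symm.trans (hN (N + 2) (by omega))
  refine ⟨N, ?_⟩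
  calc LinearMap.ker (toLin' (orbitSum T D (N + 1)))
      = LinearMap.ker (toLin' (orbitSum T D (N + 2))) := congrArg OrderDual.ofDual hstab
    _ ≤ LinearMap.ker (toLin' (T (orbitSum T D (N + 1)))) :=
      ker_toLin'_le_of_le (hT.map_nonneg (hT.orbitSum_nonneg hD _)) (hT.map_le_orbitSum_succ hD _)

lemma sandwich_mul_mul_sandwich (hT : IsPosMap T) {R : Mn n} (hR : IsStarProjection R)
    (hTR : R * T R * R = T R) : sandwich R * T * sandwich R = T * sandwich R := by
  refine LinearMap.ext_on CStarAlgebra.span_nonneg fun Y (hY : 0 ≤ Y) => ?_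
  obtain ⟨c, hc⟩ := Y.finite_real_spectrum.bddAbove
  have hYc : star R * Y * R ≤ star R * algebraMap ℝ (Mn n) c * R :=
    star_left_conjugate_le_conjugate (le_algebraMap_of_spectrum_le hc hY.isSelfAdjoint) R
  rw [hR.isSelfAdjoint.star_eq, Algebra.algebraMap_eq_smul_one, mul_smul_comm, mul_one,
    smul_mul_assoc, hR.isIdempotentElem.eq] at hYc
  have hRYR : 0 ≤ R * Y * R := by
    simpa [hR.isSelfAdjoint.star_eq] using star_left_conjugate_nonneg hY R
  simp only [Module.End.mul_apply, sandwich_apply]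
  refine hR.conj_eq_of_le (hT.map_nonneg hRYR) (hT.mono hYc) ?_
  rw [LinearMap.map_smul_of_tower, mul_smul_comm, smul_mul_assoc, hTR]

end IsPosMap

lemma IsIrreducibleMap.eq_zero_of_pow_succ_apply_mul_eq_zero {T : Module.End ℂ (Mn n)}
    (hirr : IsIrreducibleMap T) (hT : IsPosMap T) {D : Mn n} (hD : 0 ≤ D) (hTD : T D ≠ 0)
    {P : Mn n} (hP : IsStarProjection P) (horb : ∀ k, (T ^ (k + 1)) D * P = 0) : P = 0 := by
  obtain ⟨m, hker⟩ := hT.exists_ker_orbitSum_le_ker_map hD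
  set C := orbitSum T D (m + 1) with hCdef
  have hC : 0 ≤ C := hT.orbitSum_nonneg hD _
  obtain ⟨t, hRt⟩ := exists_posSpectralProj_le_smul hC
  set R : Mn n := posSpectralProj C
  have hR : IsStarProjection R := isStarProjection_posSpectralProj C
  have hTC : R * T C * R = T C := posSpectralProj_conj_eq_of_ker_le hC (hT.map_nonneg hC) hker
  have hTR : R * T R * R = T R := by
    refine hR.conj_eq_of_le (hT.map_nonneg hR.nonneg) (hT.mono hRt) ?_
    rw [LinearMap.map_smul_of_tower, mul_smul_comm, smul_mul_assoc, hTC]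
  have hinv : ∀ X, ∃ Y, T (R * X * R) = R * Y * R := fun X =>
    ⟨T (R * X * R), by simpa [sandwich_apply] using
      (LinearMap.congr_fun (hT.sandwich_mul_mul_sandwich hR hTR) X).symm⟩
  rcases hirr R hR.isSelfAdjoint hR.isIdempotentElem hinv with hR0 | hR1
  · refine absurd (le_antisymm ?_ (hT.map_nonneg hD)) hTD
    calc T D ≤ C := by
          rw [hCdef, orbitSum_succ]
          exact le_add_of_nonneg_left (hT.map_nonneg (hT.orbitSum_nonneg hD m))
      _ = R * C := (posSpectralProj_mul_of_nonneg hC).symm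
      _ = 0 := by rw [hR0, zero_mul]
  · have hCP : C * P = 0 := by simp [C, orbitSum, Finset.sum_mul, horb]
    refine le_antisymm ?_ hP.nonneg
    calc P = star P * R * P := by
          rw [hR1, hP.isSelfAdjoint.star_eq, mul_one, hP.isIdempotentElem.eq]
      _ ≤ star P * (t • C) * P := star_left_conjugate_le_conjugate hRt P
      _ = 0 := by rw [mul_smul_comm, smul_mul_assoc, mul_assoc, hCP, mul_zero, smul_zero]

end PositiveMaps

/-- Every irreducible positive trace-preserving map `T` on `M_n` satisfies
Assumption I with respect to every nonzero goal subspace `V` (orthogonal projection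
`P ≠ 0`, `Q = I − P`): `1` is not an eigenvalue of `ℚT`. -/
theorem stmt19 {n : ℕ} (T : Module.End ℂ (Mn n))
    (hTpos : IsPosMap T) (hTtr : IsTracePreserving T) (hirr : IsIrreducibleMap T)
    (P : Mn n) (hPH : P.IsHermitian) (hPidem : P * P = P) (hP0 : P ≠ 0)
    (Q : Mn n) (hQ : Q = 1 - P) :
    ¬ Module.End.HasEigenvalue (sandwich Q * T) (1 : ℂ) := by
  intro h1
  subst hQ
  have hP : IsStarProjection P := ⟨hPidem, hPH⟩
  have hS : IsPosMap (sandwich (1 - P) * T) :=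
    (isPosMap_sandwich hP.one_sub.isSelfAdjoint).mul hTpos
  obtain ⟨A, hA, hA0, hfix⟩ := hS.exists_fixedPoint_posPart_ne_zero h1
  have hD : 0 ≤ A⁺ := CFC.posPart_nonneg A
  have hTD : T A⁺ ≠ 0 := fun h => hA0 <|
    (nonneg_iff_posSemidef.mp hD).trace_eq_zero_iff.mp (by rw [← hTtr, h, trace_zero])
  exact hP0 <| hirr.eq_zero_of_pow_succ_apply_mul_eq_zero hTpos hD hTD hP
    (hTpos.pow_succ_apply_posPart_mul_eq_zero hTtr hP hA hfix)
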